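/- For ℓ ≥ 1 and 1 ≤ j ≤ ℓ, define s_{j,ℓ} : ℝˡ → ℝ (a.e.) as the sum of the j largest-in-absolute-value signed entries, i.e. s_{j,ℓ} = m_{1,ℓ} + … + m_{j,ℓ} where m_{i,ℓ}(z) is the entry z_{i₀} whose absolute value is the i-th largest among |z₁|,…,|z_ℓ|. Then s_{j,ℓ} admits the representation s_{j,ℓ} = Σ_{l=1}^{j} [ ½(Max_{j+1−l}(z) + Min_l(z)) + ½(Max_{j+1−l}(z) − Min_l(z))·sgn(Max_{j+1−l}(z) + Min_l(z)) ], where Max_i(z) and Min_i(z) denote the i-th largest and i-th smallest entries of z, valid at every point where all |z₁|,…,|z_ℓ| are pairwise distinct and nonzero. -/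
import Mathlib

theorem initseg {n : ℕ} (s : Finset (Fin n))
    (h : ∀ i ∈ s, ∀ i' : Fin n, i' ≤ i → i' ∈ s) (i : Fin n) :
    i ∈ s ↔ i.1 < s.card := by
  constructor
  · intro hi
    have hsub : Finset.Iic i ⊆ s := fun x hx => h i hi x (Finset.mem_Iic.mp hx)
    have := Finset.card_le_card hsub
    rw [Fin.card_Iic] at this
    omega
  · intro hi
    by_contra hns
    have hsub : s ⊆ Finset.Iio i := by
      intro x hx
      rw [Finset.mem_Iio]
      by_contra hxi
      exact hns (h x hx i (le_of_not_gt hxi))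
    have := Finset.card_le_card hsub
    rw [Fin.card_Iio] at this
    omega

theorem finseg {n : ℕ} (s : Finset (Fin n))
    (h : ∀ i ∈ s, ∀ i' : Fin n, i ≤ i' → i' ∈ s) (i : Fin n) :
    i ∈ s ↔ n - s.card ≤ i.1 := by
  constructor
  · intro hi
    have hsub : Finset.Ici i ⊆ s := fun x hx => h i hi x (Finset.mem_Ici.mp hx)
    have := Finset.card_le_card hsub
    rw [Fin.card_Ici] at this
    omega
  · intro hi
    by_contra hns
    have hsub : s ⊆ Finset.Ioi i := by
      intro x hx
      rw [Finset.mem_Ioi]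
      by_contra hxi
      exact hns (h x hx i (le_of_not_gt hxi))
    have := Finset.card_le_card hsub
    rw [Fin.card_Ioi] at this
    have := i.2
    omega

theorem sum_largest_signed_entries_repr
    (j ℓ : ℕ) (hj : 1 ≤ j) (hjl : j < ℓ)
    (z : Fin ℓ → ℝ) (hz : ∀ i, z i ≠ 0)
    (hinj : Function.Injective fun i => |z i|)
    (σ τ : Equiv.Perm (Fin ℓ))
    (hσ : StrictAnti fun i : Fin ℓ => |z (σ i)|)
    (hτ : StrictAnti fun i : Fin ℓ => z (τ i)) :
    ∑ l : Fin j, z (σ ⟨l.1, lt_trans l.2 hjl⟩)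
      = ∑ l : Fin j,
          ((z (τ ⟨j - 1 - l.1, by omega⟩) + z (τ ⟨ℓ - 1 - l.1, by omega⟩)) / 2
            + (z (τ ⟨j - 1 - l.1, by omega⟩) - z (τ ⟨ℓ - 1 - l.1, by omega⟩)) / 2
              * Real.sign (z (τ ⟨j - 1 - l.1, by omega⟩) + z (τ ⟨ℓ - 1 - l.1, by omega⟩))) := by
  classical
  set f : Fin j → Fin ℓ := fun l => σ ⟨l.1, lt_trans l.2 hjl⟩ with hf
  have hfinj : Function.Injective f := by
    intro a b hab
    have := σ.injective hab
    have h2 := congrArg Fin.val this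
    exact Fin.ext h2
  set A : Finset (Fin ℓ) := Finset.univ.image f with hA
  have hcardA : A.card = j := by
    rw [hA, Finset.card_image_of_injective _ hfinj, Finset.card_univ, Fintype.card_fin]
  have hmemA : ∀ i : Fin ℓ, i ∈ A ↔ (σ.symm i).1 < j := by
    intro i
    rw [hA, Finset.mem_image]
    constructor
    · rintro ⟨l, -, rfl⟩
      rw [hf]
      simp only [Equiv.symm_apply_apply]
      exact l.2
    · intro hi
      refine ⟨⟨(σ.symm i).1, hi⟩, Finset.mem_univ _, ?_⟩
      show σ ⟨(σ.symm i).1, _⟩ = i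
      have : (⟨(σ.symm i).1, lt_trans hi hjl⟩ : Fin ℓ) = σ.symm i := rfl
      rw [this, Equiv.apply_symm_apply]
  -- separation
  have hsep : ∀ i i' : Fin ℓ, i ∈ A → i' ∉ A → |z i'| < |z i| := by
    intro i i' hi hi'
    rw [hmemA] at hi hi'
    have hlt : σ.symm i < σ.symm i' := by
      rw [Fin.lt_def]; omega
    have := hσ hlt
    simpa using this
  set q : ℕ := (A.filter (fun i => z i < 0)).card with hq
  set p : ℕ := (A.filter (fun i => 0 < z i)).card with hp
  have hpq : p + q = j := by
    have hfil := Finset.card_filter_add_card_filter_not (s := A) (p := fun i => 0 < z i)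
    have heqf : A.filter (fun i => ¬ 0 < z i) = A.filter (fun i => z i < 0) := by
      apply Finset.filter_congr
      intro i _
      simp only [not_lt, eq_iff_iff]
      constructor
      · intro h; exact lt_of_le_of_ne h (hz i)
      · intro h; exact le_of_lt h
    rw [heqf] at hfil
    rw [hp, hq, ← hcardA]
    exact hfil
  -- s1 : positions of positive members of A in τ order
  set s1 : Finset (Fin ℓ) := Finset.univ.filter (fun i => τ i ∈ A ∧ 0 < z (τ i)) with hs1
  have hs1eq : s1 = (A.filter (fun i => 0 < z i)).image τ.symm := by
    ext i
    simp only [hs1, Finset.mem_filter, Finset.mem_univ, true_and, Finset.mem_image]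
    constructor
    · rintro ⟨h1, h2⟩
      exact ⟨τ i, ⟨h1, h2⟩, Equiv.symm_apply_apply _ _⟩
    · rintro ⟨b, ⟨h1, h2⟩, rfl⟩
      simp only [Equiv.apply_symm_apply]
      exact ⟨h1, h2⟩
  have hs1card : s1.card = p := by
    rw [hs1eq, Finset.card_image_of_injective _ τ.symm.injective, hp]
  have hS1 : ∀ i : Fin ℓ, (τ i ∈ A ∧ 0 < z (τ i)) ↔ i.1 < p := by
    intro i
    rw [← hs1card]
    have := initseg s1 ?_ i
    · rw [hs1] at this
      simpa using this
    · intro a ha b hba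
      rw [hs1, Finset.mem_filter] at ha ⊢
      obtain ⟨-, ha1, ha2⟩ := ha
      have hle : z (τ a) ≤ z (τ b) := hτ.antitone hba
      refine ⟨Finset.mem_univ _, ?_, by linarith⟩
      by_contra hnb
      have := hsep _ _ ha1 hnb
      rw [abs_of_pos ha2, abs_of_pos (by linarith)] at this
      linarith
  set s2 : Finset (Fin ℓ) := Finset.univ.filter (fun i => τ i ∈ A ∧ z (τ i) < 0) with hs2
  have hs2eq : s2 = (A.filter (fun i => z i < 0)).image τ.symm := by
    ext i
    simp only [hs2, Finset.mem_filter, Finset.mem_univ, true_and, Finset.mem_image]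
    constructor
    · rintro ⟨h1, h2⟩
      exact ⟨τ i, ⟨h1, h2⟩, Equiv.symm_apply_apply _ _⟩
    · rintro ⟨b, ⟨h1, h2⟩, rfl⟩
      simp only [Equiv.apply_symm_apply]
      exact ⟨h1, h2⟩
  have hs2card : s2.card = q := by
    rw [hs2eq, Finset.card_image_of_injective _ τ.symm.injective, hq]
  have hS2 : ∀ i : Fin ℓ, (τ i ∈ A ∧ z (τ i) < 0) ↔ ℓ - q ≤ i.1 := by
    intro i
    rw [← hs2card]
    have := finseg s2 ?_ i
    · rw [hs2] at this
      simpa using this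
    · intro a ha b hba
      rw [hs2, Finset.mem_filter] at ha ⊢
      obtain ⟨-, ha1, ha2⟩ := ha
      have hle : z (τ b) ≤ z (τ a) := hτ.antitone hba
      refine ⟨Finset.mem_univ _, ?_, by linarith⟩
      by_contra hnb
      have := hsep _ _ ha1 hnb
      rw [abs_of_neg ha2, abs_of_neg (by linarith)] at this
      linarith
  -- the selection function
  set g : Fin j → Fin ℓ := fun l =>
    if l.1 < q then (⟨ℓ - 1 - l.1, by omega⟩ : Fin ℓ) else ⟨j - 1 - l.1, by omega⟩ with hg
  -- per-term evaluation
  have key : ∀ l : Fin j,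
      ((z (τ ⟨j - 1 - l.1, by omega⟩) + z (τ ⟨ℓ - 1 - l.1, by omega⟩)) / 2
        + (z (τ ⟨j - 1 - l.1, by omega⟩) - z (τ ⟨ℓ - 1 - l.1, by omega⟩)) / 2
          * Real.sign (z (τ ⟨j - 1 - l.1, by omega⟩) + z (τ ⟨ℓ - 1 - l.1, by omega⟩)))
        = z (τ (g l)) := by
    intro l
    have hl := l.2
    by_cases hlq : l.1 < q
    · have hbmem : τ (⟨ℓ - 1 - l.1, by omega⟩ : Fin ℓ) ∈ A ∧ z (τ ⟨ℓ - 1 - l.1, by omega⟩) < 0 := by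
        rw [hS2]
        simp only
        omega
      have hab : z (τ ⟨j - 1 - l.1, by omega⟩) + z (τ ⟨ℓ - 1 - l.1, by omega⟩) < 0 := by
        rcases (hz (τ ⟨j - 1 - l.1, by omega⟩)).lt_or_gt with hneg | hpos
        · linarith [hbmem.2]
        · have hnotA : τ (⟨j - 1 - l.1, by omega⟩ : Fin ℓ) ∉ A := by
            intro hmem
            have := (hS1 ⟨j - 1 - l.1, by omega⟩).mp ⟨hmem, hpos⟩
            simp only at this
            omega
          have := hsep _ _ hbmem.1 hnotA
          rw [abs_of_pos hpos, abs_of_neg hbmem.2] at this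
          linarith
      rw [Real.sign_of_neg hab, hg]
      simp only [if_pos hlq]
      ring
    · have hamem : τ (⟨j - 1 - l.1, by omega⟩ : Fin ℓ) ∈ A ∧ 0 < z (τ ⟨j - 1 - l.1, by omega⟩) := by
        rw [hS1]
        simp only
        omega
      have hab : 0 < z (τ ⟨j - 1 - l.1, by omega⟩) + z (τ ⟨ℓ - 1 - l.1, by omega⟩) := by
        rcases (hz (τ ⟨ℓ - 1 - l.1, by omega⟩)).lt_or_gt with hneg | hpos
        · have hnotA : τ (⟨ℓ - 1 - l.1, by omega⟩ : Fin ℓ) ∉ A := by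
            intro hmem
            have := (hS2 ⟨ℓ - 1 - l.1, by omega⟩).mp ⟨hmem, hneg⟩
            simp only at this
            omega
          have := hsep _ _ hamem.1 hnotA
          rw [abs_of_pos hamem.2, abs_of_neg hneg] at this
          linarith
        · linarith [hamem.2]
      rw [Real.sign_of_pos hab, hg]
      simp only [if_neg hlq]
      ring
  -- h := τ ∘ g is injective with image A
  have hginj : Function.Injective fun l => τ (g l) := by
    intro l1 l2 heq
    have h12 := τ.injective heq
    have hv : (g l1).1 = (g l2).1 := congrArg Fin.val h12
    have h1 := l1.2
    have h2 := l2.2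
    rw [hg] at hv
    apply Fin.ext
    by_cases c1 : l1.1 < q <;> by_cases c2 : l2.1 < q <;>
      simp only [if_pos, if_neg, c1, c2, if_true, if_false] at hv <;> omega
  have himgsub : Finset.univ.image (fun l => τ (g l)) ⊆ A := by
    intro i hi
    rw [Finset.mem_image] at hi
    obtain ⟨l, -, rfl⟩ := hi
    have hl := l.2
    rw [hg]
    by_cases hlq : l.1 < q
    · simp only [if_pos hlq]
      exact ((hS2 _).mpr (by simp only; omega)).1
    · simp only [if_neg hlq]
      exact ((hS1 _).mpr (by simp only; omega)).1
  have himg : Finset.univ.image (fun l => τ (g l)) = A := by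
    apply Finset.eq_of_subset_of_card_le himgsub
    rw [hcardA, Finset.card_image_of_injective _ hginj, Finset.card_univ, Fintype.card_fin]
  calc ∑ l : Fin j, z (σ ⟨l.1, lt_trans l.2 hjl⟩)
      = ∑ i ∈ A, z i := by
        rw [hA]
        rw [Finset.sum_image (fun a _ b _ hab => hfinj hab)]
    _ = ∑ l : Fin j, z (τ (g l)) := by
        rw [← himg]
        rw [Finset.sum_image (fun a _ b _ hab => hginj hab)]
    _ = _ := by
        apply Finset.sum_congr rfl
        intro l _
        exact (key l).symm
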